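/- Let D = (V, A) be a skeletal directed acyclic graph. Then (i) the number of ropes of D equals the sum over all arcs a ∈ A of 2^(ts(a) − 2), where ts(a) denotes the cardinality of the transitive support of a in D; and (ii) the ropes of D are in bijection with the cliques of D with at least 2 vertices, where a clique of D is a subset K ⊆ V any two distinct vertices of which are joined by an arc of A. -/

import Mathlib

def ArcRel {V : Type*} (E : Set (V × V)) : V → V → Prop := fun x y => (x, y) ∈ E

/-- `E` has no directed cycle. -/
def AcyclicArcs {V : Type*} (E : Set (V × V)) : Prop :=
  ∀ v : V, ¬ Relation.TransGen (ArcRel E) v v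

/-- `A` is the arc set of a directed acyclic graph: arcs join distinct vertices,
at most one direction between two vertices, and no directed cycle. -/
def IsDAG {V : Type*} (A : Set (V × V)) : Prop :=
  (∀ a ∈ A, a.1 ≠ a.2) ∧ (∀ a ∈ A, Prod.swap a ∉ A) ∧ AcyclicArcs A

/-- Arc set of the reorientation of `A` where exactly the arcs of `B` are reversed. -/
def reorient {V : Type*} (A B : Set (V × V)) : Set (V × V) :=
  (A \ B) ∪ (Prod.swap '' B)

/-- `B` encodes an acyclic reorientation of `A`. -/
def ARmem {V : Type*} (A B : Set (V × V)) : Prop :=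
  B ⊆ A ∧ AcyclicArcs (reorient A B)

/-- The acyclic reorientation poset of `A`, ordered by inclusion of reversed sets. -/
abbrev ARP {V : Type*} (A : Set (V × V)) := {B : Set (V × V) // ARmem A B}

/-- Transitive reduction: delete every arc whose endpoints are joined by a
directed path of length at least 2. -/
def transRed {V : Type*} (E : Set (V × V)) : Set (V × V) :=
  {a ∈ E | ¬ ∃ w : V, ArcRel E a.1 w ∧ Relation.TransGen (ArcRel E) w a.2}

/-- Underlying undirected graph of an arc set. -/
def undirectedGraph {V : Type*} (E : Set (V × V)) : SimpleGraph V :=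
  SimpleGraph.fromRel (fun x y => (x, y) ∈ E)

/-- A directed graph is a forest if its underlying undirected graph has no cycle. -/
def IsForestArcs {V : Type*} (E : Set (V × V)) : Prop :=
  (undirectedGraph E).IsAcyclic

def inducedArcs {V : Type*} (A : Set (V × V)) (U : Set V) : Set (V × V) :=
  {a ∈ A | a.1 ∈ U ∧ a.2 ∈ U}

/-- The transitive reduction of any induced subgraph is a forest. -/
def Vertebrate {V : Type*} (A : Set (V × V)) : Prop :=
  ∀ U : Set V, IsForestArcs (transRed (inducedArcs A U))

/-- For every directed path from `u` to `v` with `(u,v) ∈ A`, any two vertices of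
the path are joined by an arc of `A`. -/
def Filled {V : Type*} (A : Set (V × V)) : Prop :=
  ∀ p : List V, p.Chain' (fun x y => (x, y) ∈ A) →
    ∀ u v : V, p.head? = some u → p.getLast? = some v → (u, v) ∈ A →
      ∀ x ∈ p, ∀ y ∈ p, x ≠ y → ((x, y) ∈ A ∨ (y, x) ∈ A)

def Skeletal {V : Type*} (A : Set (V × V)) : Prop := Vertebrate A ∧ Filled A

/-- Vertices lying on some directed path in `A` from `u` to `v` (including `u` and `v`). -/
def transSupport {V : Type*} (A : Set (V × V)) (u v : V) : Set V :=
  {w : V | Relation.ReflTransGen (ArcRel A) u w ∧ Relation.ReflTransGen (ArcRel A) w v}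

/-- Data of a quadruple `(u, v, Δ, ∇)`. -/
structure RopeData (V : Type*) where
  u : V
  v : V
  down : Set V
  up : Set V

/-- A rope of `A`: `(u,v) ∈ A` and `Δ, ∇` are disjoint sets whose union is the
transitive support of `(u,v)` minus `{u, v}`. -/
def IsRope {V : Type*} (A : Set (V × V)) (r : RopeData V) : Prop :=
  (r.u, r.v) ∈ A ∧ r.down ∩ r.up = ∅ ∧
    r.down ∪ r.up = transSupport A r.u r.v \ {r.u, r.v}

/-!
A rope `(u, v, Δ, ∇)` is determined by its arc `(u, v)` and by `Δ`, an arbitrary subset of the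
transitive support of `(u, v)` without its endpoints; this gives the count.

In a skeletal DAG the transitive support of an arc `(u, v)` is a clique: fillingness makes each of
its vertices adjacent to `u` and `v`, and two non-adjacent inner vertices `x`, `y` would make
`u x v y` a cycle in the transitive reduction of the subgraph induced by `{u, x, y, v}`. Hence
`{u, v} ∪ Δ` is a clique. Conversely a clique with at least two vertices, being completely and
acyclically oriented, has a unique source `u` and a unique sink `v`, and it arises in this way
from exactly one rope, the one on `(u, v)` with `Δ = K \ {u, v}`.
-/

section

open Relation

variable {V : Type*} {A : Set (V × V)} {u v x y : V}

def innerSupport (A : Set (V × V)) (u v : V) : Set V :=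
  transSupport A u v \ {u, v}

lemma mem_transSupport_left (huv : ReflTransGen (ArcRel A) u v) : u ∈ transSupport A u v :=
  ⟨.refl, huv⟩

lemma mem_transSupport_right (huv : ReflTransGen (ArcRel A) u v) : v ∈ transSupport A u v :=
  ⟨huv, .refl⟩

lemma ncard_innerSupport [Finite V] (huv : (u, v) ∈ A) (hne : u ≠ v) :
    (innerSupport A u v).ncard = (transSupport A u v).ncard - 2 := by
  have hpair : ({u, v} : Set V) ⊆ transSupport A u v := by
    rintro z (rfl | rfl)
    exacts [mem_transSupport_left (.single huv), mem_transSupport_right (.single huv)]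
  rw [innerSupport, Set.ncard_sdiff hpair, Set.ncard_pair hne]

namespace IsRope

variable {r : RopeData V}

lemma down_subset (hr : IsRope A r) : r.down ⊆ innerSupport A r.u r.v :=
  Set.subset_union_left.trans hr.2.2.subset

lemma up_eq (hr : IsRope A r) : r.up = innerSupport A r.u r.v \ r.down := by
  rw [innerSupport, ← hr.2.2, Set.union_sdiff_cancel_left hr.2.1.subset]

lemma eq_mk (hr : IsRope A r) : r = ⟨r.u, r.v, r.down, innerSupport A r.u r.v \ r.down⟩ := by
  rw [← hr.up_eq]

end IsRope

lemma isRope_mk (huv : (u, v) ∈ A) {D : Set V} (hD : D ⊆ innerSupport A u v) :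
    IsRope A ⟨u, v, D, innerSupport A u v \ D⟩ :=
  ⟨huv, Set.inter_sdiff_self _ _, Set.union_sdiff_cancel hD⟩

def ropeEquivSigma (A : Set (V × V)) :
    {r : RopeData V // IsRope A r} ≃ Σ a : A, 𝒫 innerSupport A a.1.1 a.1.2 where
  toFun r := ⟨⟨(r.1.u, r.1.v), r.2.1⟩, ⟨r.1.down, r.2.down_subset⟩⟩
  invFun p := ⟨_, isRope_mk p.1.2 p.2.2⟩
  left_inv r := Subtype.ext r.2.eq_mk.symm
  right_inv _ := rfl

theorem card_ropes [Finite V] (hirr : ∀ a ∈ A, a.1 ≠ a.2) :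
    Nat.card {r : RopeData V // IsRope A r} =
      ∑ a ∈ A.toFinite.toFinset, 2 ^ ((transSupport A a.1 a.2).ncard - 2) := by
  have := Fintype.ofFinite A
  rw [Nat.card_congr (ropeEquivSigma A), Nat.card_sigma,
    Finset.sum_subtype _ (fun _ => Set.Finite.mem_toFinset _)]
  refine Finset.sum_congr rfl fun a _ => ?_
  rw [Nat.card_coe_set_eq, Set.ncard_powerset, ncard_innerSupport a.2 (hirr _ a.2)]

lemma AcyclicArcs.mono {E : Set (V × V)} (hA : AcyclicArcs A) (hEA : E ⊆ A) : AcyclicArcs E :=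
  fun v h => hA v (TransGen.mono (fun _ _ hab => hEA hab) v v h)

lemma IsDAG.not_mem_of_reflTransGen (hA : IsDAG A) (h : ReflTransGen (ArcRel A) u x) :
    (x, u) ∉ A := by
  intro hxu
  rcases reflTransGen_iff_eq_or_transGen.mp h with rfl | h
  · exact hA.1 _ hxu rfl
  · exact hA.2.2 u (h.tail hxu)

lemma List.exists_isChain_through {r : V → V → Prop} (h₁ : ReflTransGen r u x)
    (h₂ : ReflTransGen r x v) :
    ∃ p : List V, p.IsChain r ∧ p.head? = some u ∧ p.getLast? = some v ∧ x ∈ p := by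
  induction h₂ with
  | refl =>
    obtain ⟨l, hl, hlast⟩ := List.exists_isChain_cons_of_relationReflTransGen h₁
    exact ⟨u :: l, hl, rfl, by rw [List.getLast?_eq_some_getLast (List.cons_ne_nil _ _), hlast],
      hlast ▸ List.getLast_mem _⟩
  | tail _ hbc ih =>
    obtain ⟨p, hp, hhead, hlast, hx⟩ := ih
    refine ⟨p ++ [_], hp.append (.singleton _) (by simpa [hlast]), ?_, by simp,
      List.mem_append_left _ hx⟩
    rw [List.head?_append, hhead, Option.some_or]

lemma Filled.symmGen_of_mem_transSupport (hF : Filled A) (huv : (u, v) ∈ A)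
    (hx : x ∈ transSupport A u v) (hy : y = u ∨ y = v) (hxy : x ≠ y) :
    SymmGen (ArcRel A) x y := by
  obtain ⟨p, hp, hhead, hlast, hxp⟩ := List.exists_isChain_through hx.1 hx.2
  refine hF p hp u v hhead hlast huv x hxp y ?_ hxy
  rcases hy with rfl | rfl
  exacts [List.mem_of_mem_head? hhead, List.mem_of_mem_getLast? hlast]

lemma arc_left_of_mem_transSupport (hA : IsDAG A) (hF : Filled A) (huv : (u, v) ∈ A)
    (hx : x ∈ transSupport A u v) (hxu : x ≠ u) : (u, x) ∈ A :=
  (hF.symmGen_of_mem_transSupport huv hx (.inl rfl) hxu).resolve_left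
    (hA.not_mem_of_reflTransGen hx.1)

lemma arc_right_of_mem_transSupport (hA : IsDAG A) (hF : Filled A) (huv : (u, v) ∈ A)
    (hx : x ∈ transSupport A u v) (hxv : x ≠ v) : (x, v) ∈ A :=
  (hF.symmGen_of_mem_transSupport huv hx (.inr rfl) hxv).resolve_right
    (hA.not_mem_of_reflTransGen hx.2)

lemma mem_transRed_of_unique_pred {E : Set (V × V)} (hE : AcyclicArcs E) (hab : (u, v) ∈ E)
    (h : ∀ c, (c, v) ∈ E → c = u) : (u, v) ∈ transRed E := by
  refine ⟨hab, ?_⟩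
  rintro ⟨w, huw, hwv⟩
  obtain ⟨c, hwc, hcv⟩ := TransGen.tail'_iff.mp hwv
  obtain rfl := h c hcv
  exact hE _ (TransGen.head' huw hwc)

lemma mem_transRed_of_unique_succ {E : Set (V × V)} (hE : AcyclicArcs E) (hab : (u, v) ∈ E)
    (h : ∀ c, (u, c) ∈ E → c = v) : (u, v) ∈ transRed E :=
  ⟨hab, fun ⟨w, huw, hwv⟩ => hE v (h w huw ▸ hwv)⟩

/-- As `x` and `y` are non-adjacent, the only arc of the induced subgraph into `x` comes from `u`
and the only arc out of `x` goes to `v`. -/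
lemma IsDAG.mem_transRed_diamond (hA : IsDAG A) (hux : (u, x) ∈ A) (hxv : (x, v) ∈ A)
    (hxy : (x, y) ∉ A) (hyx : (y, x) ∉ A) :
    (u, x) ∈ transRed (inducedArcs A {u, x, y, v}) ∧
      (x, v) ∈ transRed (inducedArcs A {u, x, y, v}) := by
  have hE : AcyclicArcs (inducedArcs A {u, x, y, v}) := hA.2.2.mono fun _ h => h.1
  constructor
  · refine mem_transRed_of_unique_pred hE ⟨hux, by simp, by simp⟩ ?_
    rintro c ⟨hcx, hc : c ∈ ({u, x, y, v} : Set V), -⟩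
    rcases hc with rfl | rfl | rfl | rfl
    · rfl
    · exact absurd rfl (hA.1 _ hcx)
    · exact absurd hcx hyx
    · exact absurd hcx (hA.2.1 _ hxv)
  · refine mem_transRed_of_unique_succ hE ⟨hxv, by simp, by simp⟩ ?_
    rintro c ⟨hxc, -, hc : c ∈ ({u, x, y, v} : Set V)⟩
    rcases hc with rfl | rfl | rfl | rfl
    · exact absurd hxc (hA.2.1 _ hux)
    · exact absurd rfl (hA.1 _ hxc)
    · exact absurd hxc hxy
    · rfl

lemma undirectedGraph_adj_of_mem {E : Set (V × V)} (h : (u, v) ∈ E) (hne : u ≠ v) :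
    (undirectedGraph E).Adj u v :=
  (SimpleGraph.fromRel_adj _ _ _).mpr ⟨hne, .inl h⟩

lemma SimpleGraph.IsAcyclic.eq_of_adj_of_adj {G : SimpleGraph V} (hG : G.IsAcyclic)
    (hux : G.Adj u x) (hxv : G.Adj x v) (huy : G.Adj u y) (hyv : G.Adj y v) (huv : u ≠ v) :
    x = y := by
  have hp : (Walk.cons hux (Walk.cons hxv Walk.nil)).IsPath := by simp [hux.ne, hxv.ne, huv]
  have hq : (Walk.cons huy (Walk.cons hyv Walk.nil)).IsPath := by simp [huy.ne, hyv.ne, huv]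
  simpa using congrArg (fun p : G.Path u v => p.1.support) ((hG.subsingleton_path u v).elim ⟨_, hp⟩ ⟨_, hq⟩)

lemma Vertebrate.symmGen_of_diamond (hA : IsDAG A) (hV : Vertebrate A) (hux : (u, x) ∈ A)
    (hxv : (x, v) ∈ A) (huy : (u, y) ∈ A) (hyv : (y, v) ∈ A) (huv : u ≠ v) (hxy : x ≠ y) :
    SymmGen (ArcRel A) x y := by
  by_contra h
  simp only [SymmGen, ArcRel, not_or] at h
  obtain ⟨hux', hxv'⟩ := hA.mem_transRed_diamond hux hxv h.1 h.2
  obtain ⟨huy', hyv'⟩ := hA.mem_transRed_diamond huy hyv h.2 h.1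
  rw [Set.insert_comm y x] at huy' hyv'
  exact hxy <| (hV _).eq_of_adj_of_adj (undirectedGraph_adj_of_mem hux' (hA.1 _ hux))
    (undirectedGraph_adj_of_mem hxv' (hA.1 _ hxv)) (undirectedGraph_adj_of_mem huy' (hA.1 _ huy))
    (undirectedGraph_adj_of_mem hyv' (hA.1 _ hyv)) huv

theorem pairwise_symmGen_transSupport (hA : IsDAG A) (hS : Skeletal A) (huv : (u, v) ∈ A) :
    (transSupport A u v).Pairwise (SymmGen (ArcRel A)) := by
  intro x hx y hy hxy
  by_cases hy_end : y = u ∨ y = v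
  · exact hS.2.symmGen_of_mem_transSupport huv hx hy_end hxy
  by_cases hx_end : x = u ∨ x = v
  · exact (hS.2.symmGen_of_mem_transSupport huv hy hx_end hxy.symm).symm
  rw [not_or] at hx_end hy_end
  exact hS.1.symmGen_of_diamond hA (arc_left_of_mem_transSupport hA hS.2 huv hx hx_end.1)
    (arc_right_of_mem_transSupport hA hS.2 huv hx hx_end.2)
    (arc_left_of_mem_transSupport hA hS.2 huv hy hy_end.1)
    (arc_right_of_mem_transSupport hA hS.2 huv hy hy_end.2) (hA.1 _ huv) hxy

lemma Set.Pairwise.exists_forall_rel_of_symmGen [Finite V] {r : V → V → Prop}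
    (hr : ∀ v, ¬ TransGen r v v) {K : Set V} (hK : K.Pairwise (SymmGen r)) (hne : K.Nonempty) :
    ∃ u ∈ K, ∀ x ∈ K, x ≠ u → r u x := by
  have : IsTrans V (TransGen r) := ⟨fun _ _ _ => TransGen.trans⟩
  have : Std.Irrefl (TransGen r) := ⟨hr⟩
  obtain ⟨u, hu, hmin⟩ := (Finite.wellFounded_of_trans_of_irrefl (TransGen r)).has_min K hne
  exact ⟨u, hu, fun x hx hxu =>
    (hK hu hx hxu.symm).resolve_right fun hxu' => hmin x hx (.single hxu')⟩

lemma eq_of_forall_ne_rel {r : V → V → Prop} (hr : ∀ a b, r a b → ¬ r b a) {K : Set V}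
    (hu : u ∈ K) (hv : v ∈ K) (hru : ∀ x ∈ K, x ≠ u → r u x) (hrv : ∀ x ∈ K, x ≠ v → r v x) :
    u = v := by
  by_contra huv
  exact hr _ _ (hru v hv (Ne.symm huv)) (hrv u hu huv)

def RopeData.clique (r : RopeData V) : Set V := {r.u, r.v} ∪ r.down

namespace IsRope

variable {r : RopeData V}

lemma clique_subset (hr : IsRope A r) : r.clique ⊆ transSupport A r.u r.v := by
  refine Set.union_subset ?_ (hr.down_subset.trans Set.sdiff_subset)
  rintro z (rfl | rfl)
  exacts [mem_transSupport_left (.single hr.1), mem_transSupport_right (.single hr.1)]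

lemma clique_diff (hr : IsRope A r) : r.clique \ {r.u, r.v} = r.down :=
  Set.union_sdiff_cancel_left fun _ ⟨hz, hzd⟩ => (hr.down_subset hzd).2 hz

lemma arc_left_of_mem_clique (hA : IsDAG A) (hF : Filled A) (hr : IsRope A r) :
    ∀ x ∈ r.clique, x ≠ r.u → (r.u, x) ∈ A :=
  fun _ hx => arc_left_of_mem_transSupport hA hF hr.1 (hr.clique_subset hx)

lemma arc_right_of_mem_clique (hA : IsDAG A) (hF : Filled A) (hr : IsRope A r) :
    ∀ x ∈ r.clique, x ≠ r.v → (x, r.v) ∈ A :=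
  fun _ hx => arc_right_of_mem_transSupport hA hF hr.1 (hr.clique_subset hx)

end IsRope

lemma RopeData.u_mem_clique (r : RopeData V) : r.u ∈ r.clique := .inl (.inl rfl)

lemma RopeData.v_mem_clique (r : RopeData V) : r.v ∈ r.clique := .inl (.inr rfl)

def cliqueOfRope [Finite V] (hA : IsDAG A) (hS : Skeletal A) :
    {r : RopeData V // IsRope A r} →
      {K : Set V // 2 ≤ K.ncard ∧ K.Pairwise (SymmGen (ArcRel A))} := fun r =>
  ⟨r.1.clique, (Set.ncard_pair (hA.1 _ r.2.1)).symm.le.trans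
      (Set.ncard_le_ncard Set.subset_union_left),
    (pairwise_symmGen_transSupport hA hS r.2.1).mono r.2.clique_subset⟩

lemma cliqueOfRope_injective [Finite V] (hA : IsDAG A) (hS : Skeletal A) :
    Function.Injective (cliqueOfRope hA hS) := by
  rintro ⟨r, hr⟩ ⟨r', hr'⟩ h
  replace h : r.clique = r'.clique := congrArg Subtype.val h
  have hu : r.u = r'.u :=
    eq_of_forall_ne_rel (fun a b hab => hA.2.1 (a, b) hab) (h ▸ r.u_mem_clique) r'.u_mem_clique
      (h ▸ hr.arc_left_of_mem_clique hA hS.2) (hr'.arc_left_of_mem_clique hA hS.2)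
  have hv : r.v = r'.v :=
    eq_of_forall_ne_rel (fun a b hab => hA.2.1 (b, a) hab) (h ▸ r.v_mem_clique) r'.v_mem_clique
      (h ▸ hr.arc_right_of_mem_clique hA hS.2) (hr'.arc_right_of_mem_clique hA hS.2)
  have hdown : r.down = r'.down := by
    rw [← hr.clique_diff, ← hr'.clique_diff, h, hu, hv]
  exact Subtype.ext (show r = r' by rw [hr.eq_mk, hr'.eq_mk, hu, hv, hdown])

lemma cliqueOfRope_surjective [Finite V] (hA : IsDAG A) (hS : Skeletal A) :
    Function.Surjective (cliqueOfRope hA hS) := by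
  rintro ⟨K, hK2, hK⟩
  have hne : K.Nonempty := Set.nonempty_of_ncard_ne_zero (by omega)
  obtain ⟨u, hu, hsrc⟩ := hK.exists_forall_rel_of_symmGen hA.2.2 hne
  obtain ⟨v, hv, hsnk⟩ := Set.Pairwise.exists_forall_rel_of_symmGen (r := flip (ArcRel A))
    (fun v h => hA.2.2 v (transGen_swap.mp h)) (fun _ hx _ hy hxy => (hK hx hy hxy).symm) hne
  have huv : (u, v) ∈ A := by
    refine hsrc v hv ?_
    rintro rfl
    obtain ⟨w, hw, hwv⟩ := Set.exists_ne_of_one_lt_ncard hK2 v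
    exact hA.2.1 _ (hsrc w hw hwv) (hsnk w hw hwv)
  have hD : K \ {u, v} ⊆ innerSupport A u v := fun z ⟨hz, hzuv⟩ =>
    ⟨⟨.single (hsrc z hz fun h => hzuv (.inl h)), .single (hsnk z hz fun h => hzuv (.inr h))⟩,
      hzuv⟩
  exact ⟨⟨_, isRope_mk huv hD⟩,
    Subtype.ext (Set.union_sdiff_cancel (Set.insert_subset hu (Set.singleton_subset_iff.mpr hv)))⟩

end

/-- Counting the ropes of a skeletal directed acyclic graph, and
bijection with the cliques with at least two vertices. -/
theorem stmt_15 {V : Type*} [Fintype V] (A : Set (V × V)) (hA : IsDAG A)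
    (hS : Skeletal A) :
    Nat.card {r : RopeData V // IsRope A r} =
      ∑ a ∈ A.toFinite.toFinset, 2 ^ ((transSupport A a.1 a.2).ncard - 2) ∧
    Nonempty ({r : RopeData V // IsRope A r} ≃
      {K : Set V // 2 ≤ K.ncard ∧
        ∀ x ∈ K, ∀ y ∈ K, x ≠ y → ((x, y) ∈ A ∨ (y, x) ∈ A)}) :=
  ⟨card_ropes hA.1, ⟨Equiv.ofBijective (cliqueOfRope hA hS)
    ⟨cliqueOfRope_injective hA hS, cliqueOfRope_surjective hA hS⟩⟩⟩
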